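/- arXiv:1907.11917 — 4 statements merged into one kernel-verified Lean document; each statement's English description precedes it below -/
import Mathlib

section
/- Let a, b ∈ ℝ³ be unit vectors with a × b ≠ 0, and let t ∈ ℝ³. Suppose the two backprojected rays intersect, i.e., there exist λ₀ ≥ 0 and λ₁ ≥ 0 with t + λ₀·a = λ₁·b. Then the depths along the rays are λ₀ = ‖b × t‖/‖a × b‖ and λ₁ = ‖a × t‖/‖a × b‖. -/
open scoped RealInnerProductSpace
open Matrix

abbrev E3 := EuclideanSpace ℝ (Fin 3)

/-- Cross product on `EuclideanSpace ℝ (Fin 3)`. -/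
noncomputable def cross3 (a b : E3) : E3 :=
  (WithLp.equiv 2 (Fin 3 → ℝ)).symm
    (crossProduct ((WithLp.equiv 2 (Fin 3 → ℝ)) a) ((WithLp.equiv 2 (Fin 3 → ℝ)) b))

/-!
Subtracting `l₀ • a` from the intersection condition gives `t = l₁ • b - l₀ • a`. Crossing with
`b` kills the `b`-term and crossing with `a` kills the `a`-term, so `b × t = l₀ (a × b)` and
`a × t = l₁ (a × b)`; taking norms, with `l₀, l₁ ≥ 0` and `a × b ≠ 0`, gives the depths.
-/

lemma cross3_smul_right (c : ℝ) (a b : E3) : cross3 a (c • b) = c • cross3 a b := by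
  simp [cross3, WithLp.ofLp_smul, WithLp.toLp_smul, _root_.map_smul]

lemma cross3_sub_right (a b c : E3) : cross3 a (b - c) = cross3 a b - cross3 a c := by
  simp [cross3, WithLp.ofLp_sub, WithLp.toLp_sub, map_sub]

lemma cross3_self (a : E3) : cross3 a a = 0 := by
  simp [cross3, cross_self]

lemma cross3_anticomm (a b : E3) : cross3 a b = -cross3 b a := by
  simp only [cross3]
  rw [← cross_anticomm]
  rfl

lemma cross3_smul_sub_smul_left (a b : E3) (x y : ℝ) :
    cross3 a (x • b - y • a) = x • cross3 a b := by
  rw [cross3_sub_right, cross3_smul_right, cross3_smul_right, cross3_self, smul_zero, sub_zero]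

lemma cross3_smul_sub_smul_right (a b : E3) (x y : ℝ) :
    cross3 b (x • b - y • a) = y • cross3 a b := by
  rw [cross3_sub_right, cross3_smul_right, cross3_smul_right, cross3_self, cross3_anticomm b a]
  module

lemma eq_norm_div_norm_of_eq_smul {E : Type*} [NormedAddCommGroup E] [NormedSpace ℝ E]
    {v w : E} {c : ℝ} (hc : 0 ≤ c) (hw : w ≠ 0) (h : v = c • w) : c = ‖v‖ / ‖w‖ := by
  rw [h, norm_smul, Real.norm_of_nonneg hc, mul_div_cancel_right₀ c (norm_ne_zero_iff.mpr hw)]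

theorem stmt_2_general (a b t : E3) (hab : cross3 a b ≠ 0)
    (l₀ l₁ : ℝ) (h₀ : 0 ≤ l₀) (h₁ : 0 ≤ l₁) (hint : t + l₀ • a = l₁ • b) :
    l₀ = ‖cross3 b t‖ / ‖cross3 a b‖ ∧ l₁ = ‖cross3 a t‖ / ‖cross3 a b‖ := by
  have ht : t = l₁ • b - l₀ • a := eq_sub_of_add_eq hint
  constructor
  · exact eq_norm_div_norm_of_eq_smul h₀ hab (by rw [ht, cross3_smul_sub_smul_right])
  · exact eq_norm_div_norm_of_eq_smul h₁ hab (by rw [ht, cross3_smul_sub_smul_left])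

theorem stmt_2 (a b t : E3) (ha : ‖a‖ = 1) (hb : ‖b‖ = 1) (hab : cross3 a b ≠ 0)
    (l₀ l₁ : ℝ) (h₀ : 0 ≤ l₀) (h₁ : 0 ≤ l₁) (hint : t + l₀ • a = l₁ • b) :
    l₀ = ‖cross3 b t‖ / ‖cross3 a b‖ ∧ l₁ = ‖cross3 a t‖ / ‖cross3 a b‖ :=
  stmt_2_general a b t hab l₀ l₁ h₀ h₁ hint
end

section
/- Let L₀ and L₁ be two lines in ℝ³ with unit direction vectors m₀ and m₁ satisfying m₀ × m₁ ≠ 0, and let (r₀, r₁) with r₀ ∈ L₀ and r₁ ∈ L₁ be the closest pair of points on the two lines. Then the midpoint x* = (r₀ + r₁)/2 minimizes the sum of squared distances to the two lines: for every x ∈ ℝ³, dist(x*, L₀)² + dist(x*, L₁)² ≤ dist(x, L₀)² + dist(x, L₁)². -/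
/-! If `r₀ ∈ s` and `r₁ ∈ t` realize the distance `d` between two sets, the triangle inequality gives
`d ≤ infDist x s + infDist x t` for every `x`, so the sum of squared distances is at least `d² / 2`.
The midpoint of `r₀` and `r₁` lies within `d / 2` of both sets and attains this bound. -/

open scoped RealInnerProductSpace
open Matrix

open Metric

theorem Metric.le_infDist_add_infDist {X : Type*} [PseudoMetricSpace X] {s t : Set X} {d : ℝ}
    (hs : s.Nonempty) (ht : t.Nonempty) (h : ∀ p ∈ s, ∀ q ∈ t, d ≤ dist p q) (x : X) :
    d ≤ infDist x s + infDist x t := by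
  have hdist : ∀ q ∈ t, d - dist x q ≤ infDist x s := fun q hq => by
    have hds : d ≤ infDist q s :=
      (le_infDist hs).2 fun p hp => dist_comm q p ▸ h p hp q hq
    linarith [infDist_le_infDist_add_dist (x := q) (y := x) (s := s), dist_comm x q]
  have : d - infDist x s ≤ infDist x t :=
    (le_infDist ht).2 fun q hq => by linarith [hdist q hq]
  linarith

section Midpoint

variable {V P : Type*} [NormedAddCommGroup V] [NormedSpace ℝ V] [MetricSpace P]
  [NormedAddTorsor V P]

theorem Metric.infDist_midpoint_le_of_mem_left {s : Set P} {r₀ : P} (h₀ : r₀ ∈ s) (r₁ : P) :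
    infDist (midpoint ℝ r₀ r₁) s ≤ dist r₀ r₁ / 2 := by
  have := infDist_le_dist_of_mem (x := midpoint ℝ r₀ r₁) h₀
  rwa [dist_midpoint_left, Real.norm_two, inv_mul_eq_div] at this

theorem Metric.infDist_midpoint_le_of_mem_right {t : Set P} (r₀ : P) {r₁ : P} (h₁ : r₁ ∈ t) :
    infDist (midpoint ℝ r₀ r₁) t ≤ dist r₀ r₁ / 2 := by
  have := infDist_le_dist_of_mem (x := midpoint ℝ r₀ r₁) h₁
  rwa [dist_midpoint_right, Real.norm_two, inv_mul_eq_div] at this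

theorem Metric.infDist_midpoint_sq_add_infDist_midpoint_sq_le {s t : Set P} {r₀ r₁ : P}
    (h₀ : r₀ ∈ s) (h₁ : r₁ ∈ t) (hclosest : ∀ p ∈ s, ∀ q ∈ t, dist r₀ r₁ ≤ dist p q) (x : P) :
    infDist (midpoint ℝ r₀ r₁) s ^ 2 + infDist (midpoint ℝ r₀ r₁) t ^ 2 ≤
      infDist x s ^ 2 + infDist x t ^ 2 := by
  have hlow := le_infDist_add_infDist ⟨r₀, h₀⟩ ⟨r₁, h₁⟩ hclosest x
  calc infDist (midpoint ℝ r₀ r₁) s ^ 2 + infDist (midpoint ℝ r₀ r₁) t ^ 2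
      ≤ (dist r₀ r₁ / 2) ^ 2 + (dist r₀ r₁ / 2) ^ 2 := by
        gcongr
        exacts [infDist_nonneg, infDist_midpoint_le_of_mem_left h₀ r₁, infDist_nonneg,
          infDist_midpoint_le_of_mem_right r₀ h₁]
    _ = dist r₀ r₁ ^ 2 / 2 := by ring
    _ ≤ (infDist x s + infDist x t) ^ 2 / 2 := by gcongr
    _ ≤ infDist x s ^ 2 + infDist x t ^ 2 := by linarith [sq_nonneg (infDist x s - infDist x t)]

end Midpoint

theorem stmt_9_general
    (L₀ L₁ : Set E3)
    (r₀ r₁ : E3) (hr₀ : r₀ ∈ L₀) (hr₁ : r₁ ∈ L₁)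
    (hclosest : ∀ p ∈ L₀, ∀ q ∈ L₁, ‖r₀ - r₁‖ ≤ ‖p - q‖) :
    ∀ x : E3,
      Metric.infDist ((1 / 2 : ℝ) • (r₀ + r₁)) L₀ ^ 2 +
        Metric.infDist ((1 / 2 : ℝ) • (r₀ + r₁)) L₁ ^ 2 ≤
      Metric.infDist x L₀ ^ 2 + Metric.infDist x L₁ ^ 2 := by
  have hmid : (1 / 2 : ℝ) • (r₀ + r₁) = midpoint ℝ r₀ r₁ := by
    rw [midpoint_eq_smul_add, invOf_eq_inv, one_div]
  rw [hmid]
  simp only [← dist_eq_norm] at hclosest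
  exact infDist_midpoint_sq_add_infDist_midpoint_sq_le hr₀ hr₁ hclosest

theorem stmt_9 (c₀ c₁ m₀ m₁ : E3)
    (hm₀ : ‖m₀‖ = 1) (hm₁ : ‖m₁‖ = 1) (hnp : cross3 m₀ m₁ ≠ 0)
    (L₀ L₁ : Set E3)
    (hL₀ : L₀ = {y | ∃ s : ℝ, y = c₀ + s • m₀})
    (hL₁ : L₁ = {y | ∃ s : ℝ, y = c₁ + s • m₁})
    (r₀ r₁ : E3) (hr₀ : r₀ ∈ L₀) (hr₁ : r₁ ∈ L₁)
    (hclosest : ∀ p ∈ L₀, ∀ q ∈ L₁, ‖r₀ - r₁‖ ≤ ‖p - q‖) :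
    ∀ x : E3,
      Metric.infDist ((1 / 2 : ℝ) • (r₀ + r₁)) L₀ ^ 2 +
        Metric.infDist ((1 / 2 : ℝ) • (r₀ + r₁)) L₁ ^ 2 ≤
      Metric.infDist x L₀ ^ 2 + Metric.infDist x L₁ ^ 2 :=
  stmt_9_general L₀ L₁ r₀ r₁ hr₀ hr₁ hclosest
end

section
/- Let L₀ and L₁ be two lines in ℝ³ with unit direction vectors m₀ and m₁ satisfying m₀ × m₁ ≠ 0, let (r₀, r₁) with r₀ ∈ L₀ and r₁ ∈ L₁ be the closest pair of points on the two lines, and let w₀, w₁ > 0. Then the weighted average x* = (w₀·r₀ + w₁·r₁)/(w₀ + w₁) minimizes the weighted sum of squared distances to the two lines: for every x ∈ ℝ³, w₀·dist(x*, L₀)² + w₁·dist(x*, L₁)² ≤ w₀·dist(x, L₀)² + w₁·dist(x, L₁)². -/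
open scoped RealInnerProductSpace
open Matrix

/-!
The argument works for any two convex sets `K₀, K₁` of a real inner product space with a closest
pair `(r₀, r₁)`. Put `a = (w₀ r₀ + w₁ r₁)/(w₀ + w₁)`. Since `a - r₀` points from `r₀`
towards `r₁`, the first-order optimality of `r₀` shows that `K₀` lies on the far side of the
hyperplane through `r₀` orthogonal to `a - r₀`; hence `d(y, K₀)² ≥ ‖a - r₀‖² + 2⟪y - a, a - r₀⟫`
for every `y`, with equality at `y = a`, and likewise for `K₁`. Adding the two bounds with weights
`w₀, w₁`, the linear terms cancel because `w₀ (a - r₀) + w₁ (a - r₁) = 0`.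
-/

open Metric

lemma le_infDist_sq_of_forall_le_dist_sq {X : Type*} [PseudoMetricSpace X] {K : Set X}
    (hK : K.Nonempty) {y : X} {C : ℝ} (h : ∀ q ∈ K, C ≤ dist y q ^ 2) : C ≤ infDist y K ^ 2 := by
  rcases le_or_gt C 0 with hC | hC
  · exact hC.trans (sq_nonneg _)
  · have hsqrt : √C ≤ infDist y K :=
      (le_infDist hK).2 fun q hq =>
        (Real.sqrt_le_sqrt (h q hq)).trans_eq (Real.sqrt_sq dist_nonneg)
    calc C = √C ^ 2 := (Real.sq_sqrt hC.le).symm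
      _ ≤ infDist y K ^ 2 := by gcongr

section InnerProductSpace

variable {F : Type*} [NormedAddCommGroup F] [InnerProductSpace ℝ F]

lemma convex_setOf_exists_eq_add_smul (c m : F) : Convex ℝ {y | ∃ s : ℝ, y = c + s • m} := by
  rintro _ ⟨s, rfl⟩ _ ⟨t, rfl⟩ a b _ _ hab
  exact ⟨a * s + b * t, by linear_combination (norm := module) hab • c⟩

lemma real_inner_sub_nonpos_of_forall_norm_sub_le {K : Set F} (hK : Convex ℝ K) {u v : F}
    (hv : v ∈ K) (h : ∀ w ∈ K, ‖u - v‖ ≤ ‖u - w‖) : ∀ w ∈ K, ⟪u - v, w - v⟫ ≤ 0 := by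
  have : Nonempty K := ⟨⟨v, hv⟩⟩
  refine (norm_eq_iInf_iff_real_inner_le_zero hK hv).1
    (le_antisymm (le_ciInf fun w => h w w.2) (ciInf_le ?_ (⟨v, hv⟩ : K)))
  exact ⟨0, Set.forall_mem_range.2 fun _ => norm_nonneg _⟩

lemma norm_sub_sq_add_two_inner_le_infDist_sq {K : Set F} {x r : F} (hr : r ∈ K)
    (h : ∀ q ∈ K, ⟪x - r, q - r⟫ ≤ 0) (y : F) :
    ‖x - r‖ ^ 2 + 2 * ⟪y - x, x - r⟫ ≤ infDist y K ^ 2 := by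
  refine le_infDist_sq_of_forall_le_dist_sq ⟨r, hr⟩ fun q hq => ?_
  have hsplit : y - q = ((y - x) - (q - r)) + (x - r) := by abel
  have hinner : ⟪(y - x) - (q - r), x - r⟫ = ⟪y - x, x - r⟫ - ⟪x - r, q - r⟫ := by
    rw [inner_sub_left, real_inner_comm (x - r) (q - r)]
  rw [dist_eq_norm, hsplit, norm_add_sq_real, hinner]
  linarith [h q hq, sq_nonneg ‖(y - x) - (q - r)‖]

theorem weighted_infDist_sq_le_of_forall_norm_sub_le {K₀ K₁ : Set F} (hK₀ : Convex ℝ K₀)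
    (hK₁ : Convex ℝ K₁) {r₀ r₁ : F} (hr₀ : r₀ ∈ K₀) (hr₁ : r₁ ∈ K₁)
    (hclosest : ∀ p ∈ K₀, ∀ q ∈ K₁, ‖r₀ - r₁‖ ≤ ‖p - q‖) {w₀ w₁ : ℝ} (hw₀ : 0 ≤ w₀)
    (hw₁ : 0 ≤ w₁) (hw : 0 < w₀ + w₁) (x : F) :
    w₀ * infDist ((w₀ + w₁)⁻¹ • (w₀ • r₀ + w₁ • r₁)) K₀ ^ 2 +
        w₁ * infDist ((w₀ + w₁)⁻¹ • (w₀ • r₀ + w₁ • r₁)) K₁ ^ 2 ≤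
      w₀ * infDist x K₀ ^ 2 + w₁ * infDist x K₁ ^ 2 := by
  set a := (w₀ + w₁)⁻¹ • (w₀ • r₀ + w₁ • r₁)
  have ha₀ : a - r₀ = (w₁ / (w₀ + w₁)) • (r₁ - r₀) := by
    simp only [a]; match_scalars <;> field_simp; ring
  have ha₁ : a - r₁ = (w₀ / (w₀ + w₁)) • (r₀ - r₁) := by
    simp only [a]; match_scalars <;> field_simp; ring
  have hbalance : w₀ • (a - r₀) + w₁ • (a - r₁) = 0 := by
    rw [ha₀, ha₁]; match_scalars <;> (field_simp; ring)
  have hopt₀ : ∀ q ∈ K₀, ⟪a - r₀, q - r₀⟫ ≤ 0 := fun q hq => by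
    rw [ha₀, real_inner_smul_left]
    refine mul_nonpos_of_nonneg_of_nonpos (by positivity) ?_
    refine real_inner_sub_nonpos_of_forall_norm_sub_le hK₀ hr₀ (fun p hp => ?_) q hq
    simpa only [norm_sub_rev r₁] using hclosest p hp r₁ hr₁
  have hopt₁ : ∀ q ∈ K₁, ⟪a - r₁, q - r₁⟫ ≤ 0 := fun q hq => by
    rw [ha₁, real_inner_smul_left]
    exact mul_nonpos_of_nonneg_of_nonpos (by positivity)
      (real_inner_sub_nonpos_of_forall_norm_sub_le hK₁ hr₁ (hclosest r₀ hr₀) q hq)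
  have hcross : w₀ * ⟪x - a, a - r₀⟫ + w₁ * ⟪x - a, a - r₁⟫ = 0 := by
    rw [← real_inner_smul_right, ← real_inner_smul_right, ← inner_add_right, hbalance,
      inner_zero_right]
  have hat₀ : infDist a K₀ ^ 2 ≤ ‖a - r₀‖ ^ 2 := by
    rw [← dist_eq_norm]; gcongr; exacts [infDist_nonneg, infDist_le_dist_of_mem hr₀]
  have hat₁ : infDist a K₁ ^ 2 ≤ ‖a - r₁‖ ^ 2 := by
    rw [← dist_eq_norm]; gcongr; exacts [infDist_nonneg, infDist_le_dist_of_mem hr₁]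
  have hx₀ := norm_sub_sq_add_two_inner_le_infDist_sq hr₀ hopt₀ x
  have hx₁ := norm_sub_sq_add_two_inner_le_infDist_sq hr₁ hopt₁ x
  linear_combination w₀ * hat₀ + w₁ * hat₁ + w₀ * hx₀ + w₁ * hx₁ - 2 * hcross

end InnerProductSpace

theorem stmt_10_general (c₀ c₁ m₀ m₁ : E3)
    (L₀ L₁ : Set E3)
    (hL₀ : L₀ = {y | ∃ s : ℝ, y = c₀ + s • m₀})
    (hL₁ : L₁ = {y | ∃ s : ℝ, y = c₁ + s • m₁})
    (r₀ r₁ : E3) (hr₀ : r₀ ∈ L₀) (hr₁ : r₁ ∈ L₁)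
    (hclosest : ∀ p ∈ L₀, ∀ q ∈ L₁, ‖r₀ - r₁‖ ≤ ‖p - q‖)
    (w₀ w₁ : ℝ) (hw₀ : 0 < w₀) (hw₁ : 0 < w₁) :
    ∀ x : E3,
      w₀ * Metric.infDist ((w₀ + w₁)⁻¹ • (w₀ • r₀ + w₁ • r₁)) L₀ ^ 2 +
        w₁ * Metric.infDist ((w₀ + w₁)⁻¹ • (w₀ • r₀ + w₁ • r₁)) L₁ ^ 2 ≤
      w₀ * Metric.infDist x L₀ ^ 2 + w₁ * Metric.infDist x L₁ ^ 2 := by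
  subst hL₀ hL₁
  exact weighted_infDist_sq_le_of_forall_norm_sub_le (convex_setOf_exists_eq_add_smul c₀ m₀)
    (convex_setOf_exists_eq_add_smul c₁ m₁) hr₀ hr₁ hclosest hw₀.le hw₁.le (by positivity)

theorem stmt_10 (c₀ c₁ m₀ m₁ : E3)
    (hm₀ : ‖m₀‖ = 1) (hm₁ : ‖m₁‖ = 1) (hnp : cross3 m₀ m₁ ≠ 0)
    (L₀ L₁ : Set E3)
    (hL₀ : L₀ = {y | ∃ s : ℝ, y = c₀ + s • m₀})
    (hL₁ : L₁ = {y | ∃ s : ℝ, y = c₁ + s • m₁})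
    (r₀ r₁ : E3) (hr₀ : r₀ ∈ L₀) (hr₁ : r₁ ∈ L₁)
    (hclosest : ∀ p ∈ L₀, ∀ q ∈ L₁, ‖r₀ - r₁‖ ≤ ‖p - q‖)
    (w₀ w₁ : ℝ) (hw₀ : 0 < w₀) (hw₁ : 0 < w₁) :
    ∀ x : E3,
      w₀ * Metric.infDist ((w₀ + w₁)⁻¹ • (w₀ • r₀ + w₁ • r₁)) L₀ ^ 2 +
        w₁ * Metric.infDist ((w₀ + w₁)⁻¹ • (w₀ • r₀ + w₁ • r₁)) L₁ ^ 2 ≤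
      w₀ * Metric.infDist x L₀ ^ 2 + w₁ * Metric.infDist x L₁ ^ 2 :=
  stmt_10_general c₀ c₁ m₀ m₁ L₀ L₁ hL₀ hL₁ r₀ r₁ hr₀ hr₁ hclosest w₀ w₁ hw₀ hw₁
end

section
/- Let a, b ∈ ℝ³ be unit vectors and t ∈ ℝ³ with a × b ≠ 0. Let λmid₀ = ((a × b)·(b × t))/‖a × b‖² and λmid₁ = ((a × b)·(a × t))/‖a × b‖² be the classic midpoint depths, and assume λmid₀ ≠ 0 and λmid₁ ≠ 0. Set λ₀ = |λmid₀| and λ₁ = |λmid₁|. Then the test-of-adequacy inequality ‖t + λ₀·a − λ₁·b‖² ≥ min(‖t + λ₀·a + λ₁·b‖², ‖t − λ₀·a − λ₁·b‖², ‖t − λ₀·a + λ₁·b‖²) holds if and only if λmid₀ < 0 or λmid₁ < 0. -/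
open scoped RealInnerProductSpace
open Matrix

/-!
The midpoint depths satisfy the normal equations: by the Binet–Cauchy identity for the cross
product, the gap `t + λmid₀ • a - λmid₁ • b` is orthogonal to `a` and `b`. By Pythagoras and the
linear independence of `a` and `b`, `(λmid₀, λmid₁)` is then the strict minimiser of
`(x, y) ↦ ‖t + x • a - y • b‖²`. Exactly one of the four sign choices `(±|λmid₀|, ±|λmid₁|)` is this
minimiser, and the test compares the choice `(|λmid₀|, |λmid₁|)` with the other three, so it
succeeds exactly when the minimiser is not that choice, i.e. when some depth is negative.
-/

section InnerProductSpace

variable {V : Type*} [NormedAddCommGroup V] [InnerProductSpace ℝ V]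

theorem norm_add_smul_sub_smul_sq_lt_of_inner_eq_zero {a b t : V}
    (hab : LinearIndependent ℝ ![a, b]) {p q : ℝ} (ha : ⟪t + p • a - q • b, a⟫ = 0)
    (hb : ⟪t + p • a - q • b, b⟫ = 0) {x y : ℝ} (hxy : (x, y) ≠ (p, q)) :
    ‖t + p • a - q • b‖ ^ 2 < ‖t + x • a - y • b‖ ^ 2 := by
  set m := t + p • a - q • b
  have hdecomp : t + x • a - y • b = m + ((x - p) • a + (q - y) • b) := by simp only [m]; module
  have horth : ⟪m, (x - p) • a + (q - y) • b⟫ = 0 := by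
    rw [inner_add_right, real_inner_smul_right, real_inner_smul_right, ha, hb]; ring
  have hne : (x - p) • a + (q - y) • b ≠ 0 := fun h ↦ by
    obtain ⟨hx, hy⟩ := LinearIndependent.pair_iff.mp hab _ _ h
    exact hxy (Prod.ext (sub_eq_zero.mp hx) (sub_eq_zero.mp hy).symm)
  rw [hdecomp, sq, sq, norm_add_sq_eq_norm_sq_add_norm_sq_real horth]
  simpa using norm_pos_iff.mpr hne

end InnerProductSpace

theorem inner_cross3_cross3 (u v w x : E3) :
    ⟪cross3 u v, cross3 w x⟫ = ⟪u, w⟫ * ⟪v, x⟫ - ⟪u, x⟫ * ⟪v, w⟫ := by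
  simp only [cross3, EuclideanSpace.inner_eq_star_dotProduct, star_trivial]
  simp [cross_dot_cross]
  ring

theorem linearIndependent_of_cross3_ne_zero {a b : E3} (h : cross3 a b ≠ 0) :
    LinearIndependent ℝ ![a, b] := by
  have := crossProduct_ne_zero_iff_linearIndependent.mp (by simpa [cross3] using h)
  rw [LinearIndependent.pair_iff] at this ⊢
  intro s u hsu
  exact this s u (by simpa using congrArg WithLp.ofLp hsu)

noncomputable def midDepth₀ (a b t : E3) : ℝ := ⟪cross3 a b, cross3 b t⟫ / ‖cross3 a b‖ ^ 2

noncomputable def midDepth₁ (a b t : E3) : ℝ := ⟪cross3 a b, cross3 a t⟫ / ‖cross3 a b‖ ^ 2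

theorem inner_add_midDepth_smul_sub_midDepth_smul_eq_zero {a b : E3} (ha : ‖a‖ = 1)
    (hb : ‖b‖ = 1) (hab : cross3 a b ≠ 0) (t : E3) :
    ⟪t + midDepth₀ a b t • a - midDepth₁ a b t • b, a⟫ = 0 ∧
      ⟪t + midDepth₀ a b t • a - midDepth₁ a b t • b, b⟫ = 0 := by
  have hN : ‖cross3 a b‖ ^ 2 ≠ 0 := by positivity
  have hnorm : ‖cross3 a b‖ ^ 2 = 1 - ⟪a, b⟫ ^ 2 := by
    rw [← real_inner_self_eq_norm_sq, inner_cross3_cross3, real_inner_self_eq_norm_sq,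
      real_inner_self_eq_norm_sq, ha, hb, real_inner_comm b a]
    ring
  have h₀ : midDepth₀ a b t * ‖cross3 a b‖ ^ 2 = ⟪a, b⟫ * ⟪b, t⟫ - ⟪a, t⟫ := by
    rw [midDepth₀, div_mul_cancel₀ _ hN, inner_cross3_cross3, real_inner_self_eq_norm_sq, hb]
    ring
  have h₁ : midDepth₁ a b t * ‖cross3 a b‖ ^ 2 = ⟪b, t⟫ - ⟪a, b⟫ * ⟪a, t⟫ := by
    rw [midDepth₁, div_mul_cancel₀ _ hN, inner_cross3_cross3, real_inner_self_eq_norm_sq, ha,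
      real_inner_comm b a]
    ring
  simp only [inner_sub_left, inner_add_left, real_inner_smul_left, real_inner_self_eq_norm_sq,
    ha, hb, real_inner_comm a t, real_inner_comm b t, real_inner_comm a b]
  constructor <;> refine mul_right_cancel₀ hN ?_
  · linear_combination h₀ - ⟪a, b⟫ * h₁ + ⟪a, t⟫ * hnorm
  · linear_combination ⟪a, b⟫ * h₀ - h₁ + ⟪b, t⟫ * hnorm

theorem adequacy_test_iff_of_isStrictMin {f : ℝ → ℝ → ℝ} {p q : ℝ} (hp : p ≠ 0) (hq : q ≠ 0)
    (hmin : ∀ x y, (x, y) ≠ (p, q) → f p q < f x y) :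
    min (f |p| (-|q|)) (min (f (-|p|) |q|) (f (-|p|) (-|q|))) ≤ f |p| |q| ↔ p < 0 ∨ q < 0 := by
  have hle (x y : ℝ) : f p q ≤ f x y := by
    by_cases h : (x, y) = (p, q)
    · obtain ⟨rfl, rfl⟩ := Prod.mk.inj h
      exact le_rfl
    · exact (hmin x y h).le
  constructor
  · intro h
    by_contra! hpos
    rw [abs_of_pos (hpos.1.lt_of_ne' hp), abs_of_pos (hpos.2.lt_of_ne' hq)] at h
    refine h.not_gt (lt_min (hmin _ _ ?_) (lt_min (hmin _ _ ?_) (hmin _ _ ?_))) <;>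
      simp [neg_ne_self.mpr, hp, hq]
  · intro h
    rcases hp.lt_or_gt with hp' | hp' <;> rcases hq.lt_or_gt with hq' | hq'
    · simp only [abs_of_neg hp', abs_of_neg hq', neg_neg]
      exact (min_le_right _ _).trans ((min_le_right _ _).trans (hle _ _))
    · simp only [abs_of_neg hp', abs_of_pos hq', neg_neg]
      exact (min_le_right _ _).trans ((min_le_left _ _).trans (hle _ _))
    · simp only [abs_of_pos hp', abs_of_neg hq', neg_neg]
      exact (min_le_left _ _).trans (hle _ _)
    · exact absurd h (not_or.mpr ⟨hp'.not_gt, hq'.not_gt⟩)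

theorem stmt_13 (a b t : E3) (ha : ‖a‖ = 1) (hb : ‖b‖ = 1) (hab : cross3 a b ≠ 0)
    (lmid₀ lmid₁ : ℝ)
    (h0 : lmid₀ = ⟪cross3 a b, cross3 b t⟫ / ‖cross3 a b‖ ^ 2)
    (h1 : lmid₁ = ⟪cross3 a b, cross3 a t⟫ / ‖cross3 a b‖ ^ 2)
    (hne0 : lmid₀ ≠ 0) (hne1 : lmid₁ ≠ 0)
    (l₀ l₁ : ℝ) (hl₀ : l₀ = |lmid₀|) (hl₁ : l₁ = |lmid₁|) :
    ‖t + l₀ • a - l₁ • b‖ ^ 2 ≥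
      min (‖t + l₀ • a + l₁ • b‖ ^ 2)
        (min (‖t - l₀ • a - l₁ • b‖ ^ 2) (‖t - l₀ • a + l₁ • b‖ ^ 2)) ↔
    lmid₀ < 0 ∨ lmid₁ < 0 := by
  have hmid₀ : midDepth₀ a b t = lmid₀ := h0.symm
  have hmid₁ : midDepth₁ a b t = lmid₁ := h1.symm
  obtain ⟨hgap_a, hgap_b⟩ := inner_add_midDepth_smul_sub_midDepth_smul_eq_zero ha hb hab t
  rw [hmid₀, hmid₁] at hgap_a hgap_b
  have key := adequacy_test_iff_of_isStrictMin (f := fun x y ↦ ‖t + x • a - y • b‖ ^ 2) hne0 hne1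
    fun _ _ ↦ norm_add_smul_sub_smul_sq_lt_of_inner_eq_zero
      (linearIndependent_of_cross3_ne_zero hab) hgap_a hgap_b
  subst hl₀ hl₁
  simpa only [neg_smul, ← sub_eq_add_neg, sub_neg_eq_add] using key
end
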